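/- In the q-shuffle algebra V on letters x, y, for every natural number n, the q-shuffle commutator [x, (xxyy)^n xx] = x ⋆ ((xxyy)^n xx) − ((xxyy)^n xx) ⋆ x equals 0, where (xxyy)^n xx denotes the concatenation word. -/
import Mathlib


noncomputable section

/-- The letter `x`. -/
def bX : Bool := false
/-- The letter `y`. -/
def bY : Bool := true

/-- The bilinear pairing on letters: `⟨x,x⟩ = ⟨y,y⟩ = 2`, `⟨x,y⟩ = ⟨y,x⟩ = -2`. -/
def qbr (a b : Bool) : ℤ := if a = b then 2 else -2

/-- The sum `⟨a, w₁⟩ + ⋯ + ⟨a, wₙ⟩` for a letter `a` and a word `w`. -/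
def qE (a : Bool) (w : List Bool) : ℤ := (w.map (qbr a)).sum

/-- Linear map on the free algebra (words-indexed finsupps) given by prepending a letter. -/
def qcons (F : Type*) [Field F] (a : Bool) :
    (List Bool →₀ F) →ₗ[F] (List Bool →₀ F) :=
  Finsupp.lmapDomain F F (List.cons a)

/-- The q-shuffle product of two words, as an element of the free algebra `List Bool →₀ F`.
Defined by the recursion `u ⋆ v = u₁((u₂⋯u_r) ⋆ v) + q^{⟨v₁,u₁⟩+⋯+⟨v₁,u_r⟩} v₁(u ⋆ (v₂⋯v_s))`. -/
def qsh {F : Type*} [Field F] (q : F) : List Bool → List Bool → (List Bool →₀ F)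
  | [], v => Finsupp.single v 1
  | a :: u, [] => Finsupp.single (a :: u) 1
  | a :: u, b :: v =>
      qcons F a (qsh q u (b :: v)) +
        (q ^ (qbr b a + qE b u)) • qcons F b (qsh q (a :: u) v)
  termination_by u v => u.length + v.length
  decreasing_by all_goals (simp only [List.length_cons]; omega)

/-- Concatenation power of a word. -/
def wpow (w : List Bool) : ℕ → List Bool
  | 0 => []
  | n + 1 => w ++ wpow w n

def wXXYY : List Bool := [bX, bX, bY, bY]
def wYYXX : List Bool := [bY, bY, bX, bX]
def wXY : List Bool := [bX, bY]
def wYX : List Bool := [bY, bX]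


section Aux

variable {F : Type*} [Field F]

lemma qsh_nil_left (q : F) (v : List Bool) : qsh q [] v = Finsupp.single v 1 := by
  cases v <;> rw [qsh]

lemma qsh_nil_right (q : F) (a : Bool) (u : List Bool) :
    qsh q (a :: u) [] = Finsupp.single (a :: u) 1 := by rw [qsh]

lemma qsh_cons_cons (q : F) (a b : Bool) (u v : List Bool) :
    qsh q (a :: u) (b :: v) = qcons F a (qsh q u (b :: v)) +
        (q ^ (qbr b a + qE b u)) • qcons F b (qsh q (a :: u) v) := by rw [qsh]

lemma qcons_single (a : Bool) (w : List Bool) (c : F) :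
    qcons F a (Finsupp.single w c) = Finsupp.single (a :: w) c := by
  simp [qcons, Finsupp.lmapDomain, Finsupp.mapDomain_single]

lemma qE_cons (a b : Bool) (w : List Bool) : qE a (b :: w) = qbr a b + qE a w := by
  simp [qE]

lemma qE_nil (a : Bool) : qE a [] = 0 := by simp [qE]

lemma qbr_xx : qbr bX bX = 2 := rfl
lemma qbr_xy : qbr bX bY = -2 := rfl
lemma qbr_yx : qbr bY bX = -2 := rfl
lemma qbr_yy : qbr bY bY = 2 := rfl

lemma key (q : F) (hq : q ≠ 0) (w : List Bool) (hw : qE bX w = 4) :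
    qsh q [bX] (wXXYY ++ w) - qsh q (wXXYY ++ w) [bX]
      = qcons F bX (qcons F bX (qcons F bY (qcons F bY
          (qsh q [bX] w - qsh q w [bX])))) := by
  simp only [wXXYY, List.cons_append, List.nil_append]
  simp only [qsh_cons_cons, qsh_nil_left, qsh_nil_right, qE_cons, qE_nil, hw,
    qbr_xx, qbr_xy, qbr_yx, qbr_yy,
    qcons_single, map_add, map_smul, map_sub, smul_add, smul_smul]
  match_scalars <;> (norm_num [zpow_add₀ hq, zpow_neg, zpow_sub₀ hq, zpow_ofNat]
                     try field_simp
                     try ring)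

lemma qE_append (a : Bool) (u v : List Bool) : qE a (u ++ v) = qE a u + qE a v := by
  simp [qE]

lemma qE_wn (n : ℕ) : qE bX (wpow wXXYY n ++ [bX, bX]) = 4 := by
  induction n with
  | zero => simp [wpow, qE, qbr, bX]
  | succ n ih =>
      have : wpow wXXYY (n+1) ++ [bX, bX] = wXXYY ++ (wpow wXXYY n ++ [bX, bX]) := by
        simp [wpow]
      rw [this, qE_append, ih]
      simp [wXXYY, qE, qbr, bX, bY]

end Aux

/-- `[x, (xxyy)^n xx] = 0` in the q-shuffle algebra. -/
theorem stmt1 {F : Type*} [Field F] [CharZero F] (q : F) (hq : q ≠ 0)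
    (hq1 : ∀ m : ℕ, 0 < m → q ^ m ≠ 1) (n : ℕ) :
    qsh q [bX] (wpow wXXYY n ++ [bX, bX]) - qsh q (wpow wXXYY n ++ [bX, bX]) [bX] = 0 := by
  induction n with
  | zero =>
      show qsh q [bX] ([] ++ [bX, bX]) - qsh q ([] ++ [bX, bX]) [bX] = 0
      simp only [List.nil_append]
      simp only [qsh_cons_cons, qsh_nil_left, qsh_nil_right, qE_cons, qE_nil,
        qbr_xx, qbr_xy, qbr_yx, qbr_yy,
        qcons_single, map_add, map_smul, map_sub, smul_add, smul_smul]
      match_scalars <;> (norm_num [zpow_add₀ hq, zpow_neg, zpow_sub₀ hq, zpow_ofNat]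
                         try field_simp
                         try ring)
  | succ n ih =>
      have hrw : wpow wXXYY (n+1) ++ [bX, bX] = wXXYY ++ (wpow wXXYY n ++ [bX, bX]) := by
        simp [wpow]
      rw [hrw, key q hq _ (qE_wn n), ih]
      simp
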